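/- arXiv:0710.1344 — 2 statements merged into one kernel-verified Lean document; each statement's English description precedes it below -/
import Mathlib

section
/- Let A ≥ C > 0 and B, D, E be real numbers, set F = E²/(4C), and define the Gaussian kernel ρ(x₁,x₂) = (2√C/√π)·exp(−A(x₁−x₂)² − iB(x₁²−x₂²) − C(x₁+x₂)² − iD(x₁−x₂) − E(x₁+x₂) − F) on ℝ×ℝ. Then ∫ρ(x,x)dx = 1, and with m := ∫ x ρ(x,x) dx = −E/(4C) one has ∫∫(x₁−x₂)²|ρ(x₁,x₂)|²dx₁dx₂ / ∫∫|ρ(x₁,x₂)|²dx₁dx₂ = 1/(4A) and ∫∫(x₁+x₂−2m)²|ρ(x₁,x₂)|²dx₁dx₂ / ∫∫|ρ(x₁,x₂)|²dx₁dx₂ = 1/(4C). Consequently the spatial coherence index S_X(ρ) := (∫∫(x₁−x₂)²|ρ|²)^{1/2} / (∫∫(x₁+x₂−2m)²|ρ|²)^{1/2} equals √(C/A). -/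
/-!
On the diagonal the phase of `ρ` vanishes and, since `F = E²/(4C)` completes the square,
`ρ(x,x) = (2√C/√π) exp(-4C(x-m)²)` is a normalized Gaussian centred at `m`.
Off the diagonal only the modulus matters:
`|ρ|² = (4C/π) exp(-2A(x₁-x₂)² - 2C(x₁+x₂-2m)²)`. Completing the square in `x₂` reduces the
iterated integral of any quadratic weight in `x₁ - x₂` and `x₁ + x₂ - 2m` to one-dimensional
Gaussian moments, giving second moments `1/(4A)` and `1/(4C)` in these two directions
and total mass `√(C/A)`, which cancels in the ratios.
-/

open MeasureTheory Real

section GaussianMoments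

variable {b : ℝ}

lemma integrable_sq_mul_exp_neg_mul_sq (hb : 0 < b) :
    Integrable fun x : ℝ => x ^ 2 * exp (-b * x ^ 2) := by
  have h := integrable_rpow_mul_exp_neg_mul_sq hb (by norm_num : (-1 : ℝ) < 2)
  simp only [← Real.rpow_natCast] at h ⊢
  exact_mod_cast h

lemma integral_mul_exp_neg_mul_sq (b : ℝ) : ∫ x : ℝ, x * exp (-b * x ^ 2) = 0 := by
  have h := integral_neg_eq_self (fun x : ℝ => x * exp (-b * x ^ 2)) volume
  simp only [neg_sq, neg_mul, integral_neg] at h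
  simp only [neg_mul]
  linarith

lemma integral_sq_mul_exp_neg_mul_sq (hb : 0 < b) :
    ∫ x : ℝ, x ^ 2 * exp (-b * x ^ 2) = √(π / b) / (2 * b) := by
  have hv (x : ℝ) : HasDerivAt (fun x => -(2 * b)⁻¹ * exp (-b * x ^ 2))
      (x * exp (-b * x ^ 2)) x := by
    refine (((hasDerivAt_pow 2 x).const_mul (-b)).exp.const_mul (-(2 * b)⁻¹)).congr_deriv ?_
    field_simp
    ring
  have h := integral_mul_deriv_eq_deriv_mul_of_integrable (u := fun x => x) (u' := fun _ => 1)
    (fun x _ => hasDerivAt_id' x) (fun x _ => hv x)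
    (by simpa only [Pi.mul_def, sq, mul_assoc] using integrable_sq_mul_exp_neg_mul_sq hb)
    (by simpa only [Pi.mul_def, one_mul] using (integrable_exp_neg_mul_sq hb).const_mul _)
    (by simpa only [Pi.mul_def, mul_left_comm] using
      (integrable_mul_exp_neg_mul_sq hb).const_mul _)
  simp only [one_mul, integral_const_mul, integral_gaussian, ← mul_assoc, ← sq] at h
  rw [h]
  field_simp

theorem integral_quadratic_mul_exp_neg_mul_sq_sub (hb : 0 < b) (μ c₀ c₁ c₂ : ℝ) :
    ∫ x : ℝ, (c₂ * (x - μ) ^ 2 + c₁ * (x - μ) + c₀) * exp (-b * (x - μ) ^ 2) =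
      (c₂ / (2 * b) + c₀) * √(π / b) := by
  rw [integral_sub_right_eq_self
    (fun x => (c₂ * x ^ 2 + c₁ * x + c₀) * exp (-b * x ^ 2)) μ]
  simp only [add_mul, mul_assoc]
  rw [integral_add _ ((integrable_exp_neg_mul_sq hb).const_mul _),
    integral_add ((integrable_sq_mul_exp_neg_mul_sq hb).const_mul _)
      ((integrable_mul_exp_neg_mul_sq hb).const_mul _),
    integral_const_mul, integral_const_mul, integral_const_mul, integral_sq_mul_exp_neg_mul_sq hb,
    integral_mul_exp_neg_mul_sq, integral_gaussian]
  · ring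
  · exact ((integrable_sq_mul_exp_neg_mul_sq hb).const_mul _).add
      ((integrable_mul_exp_neg_mul_sq hb).const_mul _)

end GaussianMoments

theorem integral_integral_quadratic_mul_exp_neg {a c : ℝ} (ha : 0 < a) (hc : 0 < c)
    (μ p q r : ℝ) :
    ∫ x₁ : ℝ, ∫ x₂ : ℝ, (p * (x₁ - x₂) ^ 2 + q * (x₁ + x₂ - 2 * μ) ^ 2 + r) *
        exp (-(a * (x₁ - x₂) ^ 2 + c * (x₁ + x₂ - 2 * μ) ^ 2)) =
      (p / (2 * a) + q / (2 * c) + r) * (π / (2 * √(a * c))) := by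
  have hac : 0 < a + c := by positivity
  have hk : 0 < 4 * a * c / (a + c) := by positivity
  have inner (x₁ : ℝ) : ∫ x₂ : ℝ, (p * (x₁ - x₂) ^ 2 + q * (x₁ + x₂ - 2 * μ) ^ 2 + r) *
        exp (-(a * (x₁ - x₂) ^ 2 + c * (x₁ + x₂ - 2 * μ) ^ 2)) =
      √(π / (a + c)) * ((4 * (p * c ^ 2 + q * a ^ 2) / (a + c) ^ 2 * (x₁ - μ) ^ 2 + 0 * (x₁ - μ)
        + ((p + q) / (2 * (a + c)) + r)) * exp (-(4 * a * c / (a + c)) * (x₁ - μ) ^ 2)) := by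
    set ν := ((a - c) * x₁ + 2 * c * μ) / (a + c)
    have hpt (x₂ : ℝ) : (p * (x₁ - x₂) ^ 2 + q * (x₁ + x₂ - 2 * μ) ^ 2 + r) *
          exp (-(a * (x₁ - x₂) ^ 2 + c * (x₁ + x₂ - 2 * μ) ^ 2)) =
        exp (-(4 * a * c / (a + c)) * (x₁ - μ) ^ 2) * (((p + q) * (x₂ - ν) ^ 2
          + 4 * (q * a - p * c) / (a + c) * (x₁ - μ) * (x₂ - ν)
          + (4 * (p * c ^ 2 + q * a ^ 2) / (a + c) ^ 2 * (x₁ - μ) ^ 2 + r))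
          * exp (-(a + c) * (x₂ - ν) ^ 2)) := by
      have hpoly : p * (x₁ - x₂) ^ 2 + q * (x₁ + x₂ - 2 * μ) ^ 2 + r = (p + q) * (x₂ - ν) ^ 2
          + 4 * (q * a - p * c) / (a + c) * (x₁ - μ) * (x₂ - ν)
          + (4 * (p * c ^ 2 + q * a ^ 2) / (a + c) ^ 2 * (x₁ - μ) ^ 2 + r) := by
        simp only [ν]
        field_simp
        ring
      have hquad : -(a * (x₁ - x₂) ^ 2 + c * (x₁ + x₂ - 2 * μ) ^ 2) =
          -(4 * a * c / (a + c)) * (x₁ - μ) ^ 2 + -(a + c) * (x₂ - ν) ^ 2 := by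
        simp only [ν]
        field_simp
        ring
      rw [hpoly, hquad, exp_add]
      ring
    simp only [hpt, integral_const_mul, integral_quadratic_mul_exp_neg_mul_sq_sub hac]
    ring
  simp only [inner, integral_const_mul, integral_quadratic_mul_exp_neg_mul_sq_sub hk]
  have hroot : √(π / (a + c)) * √(π / (4 * a * c / (a + c))) = π / (2 * √(a * c)) := by
    rw [← sqrt_mul (by positivity), ← sqrt_sq (by positivity : 0 ≤ π / (2 * √(a * c)))]
    congr 1
    rw [div_pow, mul_pow, sq_sqrt (by positivity)]
    field_simp
    ring
  rw [← hroot]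
  field_simp
  ring

noncomputable def gaussianKernel (A B C D E F x₁ x₂ : ℝ) : ℂ :=
  ((2 * √C / √π : ℝ) : ℂ) *
    Complex.exp (-((A * (x₁ - x₂) ^ 2 : ℝ) : ℂ)
      - Complex.I * ((B * (x₁ ^ 2 - x₂ ^ 2) : ℝ) : ℂ)
      - ((C * (x₁ + x₂) ^ 2 : ℝ) : ℂ)
      - Complex.I * ((D * (x₁ - x₂) : ℝ) : ℂ)
      - ((E * (x₁ + x₂) : ℝ) : ℂ)
      - ((F : ℝ) : ℂ))

namespace gaussianKernel

variable {A B C D E F m : ℝ}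

lemma eq_ofReal_mul_exp_mul_I (hC : C ≠ 0) (hF : F = E ^ 2 / (4 * C)) (hm : m = -E / (4 * C))
    (x₁ x₂ : ℝ) :
    gaussianKernel A B C D E F x₁ x₂ =
      ((2 * √C / √π * exp (-(A * (x₁ - x₂) ^ 2 + C * (x₁ + x₂ - 2 * m) ^ 2)) : ℝ) : ℂ) *
        Complex.exp ((-(B * (x₁ ^ 2 - x₂ ^ 2) + D * (x₁ - x₂)) : ℝ) * Complex.I) := by
  rw [gaussianKernel, Complex.ofReal_mul (2 * √C / √π), Complex.ofReal_exp, mul_assoc,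
    ← Complex.exp_add]
  congr 2
  have hC' : (C : ℂ) ≠ 0 := Complex.ofReal_ne_zero.mpr hC
  subst hF hm
  push_cast
  field_simp
  ring

lemma diag (hC : C ≠ 0) (hF : F = E ^ 2 / (4 * C)) (hm : m = -E / (4 * C)) (x : ℝ) :
    gaussianKernel A B C D E F x x = ((2 * √C / √π * exp (-(4 * C) * (x - m) ^ 2) : ℝ) : ℂ) := by
  rw [eq_ofReal_mul_exp_mul_I hC hF hm]
  simp only [sub_self, mul_zero, zero_pow two_ne_zero, add_zero, neg_zero, Complex.ofReal_zero,
    zero_mul, Complex.exp_zero, mul_one]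
  ring_nf

lemma norm_sq (hC : 0 < C) (hF : F = E ^ 2 / (4 * C)) (hm : m = -E / (4 * C))
    (x₁ x₂ : ℝ) :
    ‖gaussianKernel A B C D E F x₁ x₂‖ ^ 2 =
      4 * C / π * exp (-(2 * A * (x₁ - x₂) ^ 2 + 2 * C * (x₁ + x₂ - 2 * m) ^ 2)) := by
  rw [eq_ofReal_mul_exp_mul_I hC.ne' hF hm, norm_mul, Complex.norm_exp_ofReal_mul_I, mul_one,
    Complex.norm_real, norm_of_nonneg (by positivity), mul_pow, div_pow, mul_pow,
    sq_sqrt hC.le, sq_sqrt pi_pos.le, ← exp_nat_mul]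
  ring_nf

lemma integral_affine_mul_diag (hC : 0 < C) (hF : F = E ^ 2 / (4 * C)) (hm : m = -E / (4 * C))
    (c₀ c₁ : ℝ) :
    ∫ x : ℝ, ((c₁ * (x - m) + c₀ : ℝ) : ℂ) * gaussianKernel A B C D E F x x = c₀ := by
  have hnorm : 2 * √C / √π * √(π / (4 * C)) = 1 := by
    rw [sqrt_div pi_pos.le, show 4 * C = 2 ^ 2 * C by ring, sqrt_mul (by positivity),
      sqrt_sq zero_le_two]
    field_simp
  simp_rw [diag hC.ne' hF hm, ← Complex.ofReal_mul, mul_left_comm _ (2 * √C / √π)]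
  rw [integral_complex_ofReal, integral_const_mul]
  have h := integral_quadratic_mul_exp_neg_mul_sq_sub (by positivity : 0 < 4 * C) m c₀ c₁ 0
  simp only [zero_mul, zero_add, zero_div] at h
  rw [h, mul_left_comm, hnorm, mul_one]

lemma integral_integral_mul_norm_sq (hA : 0 < A) (hC : 0 < C) (hF : F = E ^ 2 / (4 * C))
    (hm : m = -E / (4 * C)) (p q r : ℝ) :
    ∫ x₁ : ℝ, ∫ x₂ : ℝ, (p * (x₁ - x₂) ^ 2 + q * (x₁ + x₂ - 2 * m) ^ 2 + r) *
        ‖gaussianKernel A B C D E F x₁ x₂‖ ^ 2 =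
      (p / (4 * A) + q / (4 * C) + r) * √(C / A) := by
  simp_rw [norm_sq hC hF hm, mul_left_comm _ (4 * C / π), integral_const_mul]
  rw [integral_integral_quadratic_mul_exp_neg (by positivity) (by positivity)]
  have hroot : √(2 * A * (2 * C)) = 2 * (√A * √C) := by
    rw [show 2 * A * (2 * C) = 2 ^ 2 * (A * C) by ring, sqrt_mul (by positivity),
      sqrt_sq zero_le_two, sqrt_mul hA.le]
  rw [hroot, sqrt_div hC.le]
  field_simp
  rw [sq_sqrt hC.le]
  ring

end gaussianKernel

/-- For the one-dimensional Gaussian density kernel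
`ρ(x₁,x₂) = (2√C/√π)·exp(−A(x₁−x₂)² − iB(x₁²−x₂²) − C(x₁+x₂)² − iD(x₁−x₂) − E(x₁+x₂) − F)`
with `A ≥ C > 0` and `F = E²/(4C)`: the diagonal integrates to `1`, the position mean is
`m = −E/(4C)`, the normalized off-diagonal and diagonal second moments are `1/(4A)` and `1/(4C)`,
and the spatial coherence index equals `√(C/A)`. -/
theorem gaussian_coherence_index
    (A B C D E F : ℝ) (hC : 0 < C) (hAC : C ≤ A) (hF : F = E ^ 2 / (4 * C))
    (ρ : ℝ → ℝ → ℂ)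
    (hρ : ∀ x₁ x₂ : ℝ, ρ x₁ x₂ =
      ((2 * Real.sqrt C / Real.sqrt Real.pi : ℝ) : ℂ) *
        Complex.exp (-((A * (x₁ - x₂) ^ 2 : ℝ) : ℂ)
          - Complex.I * ((B * (x₁ ^ 2 - x₂ ^ 2) : ℝ) : ℂ)
          - ((C * (x₁ + x₂) ^ 2 : ℝ) : ℂ)
          - Complex.I * ((D * (x₁ - x₂) : ℝ) : ℂ)
          - ((E * (x₁ + x₂) : ℝ) : ℂ)
          - ((F : ℝ) : ℂ)))
    (m : ℝ) (hm : m = -E / (4 * C)) :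
    (∫ x : ℝ, ρ x x) = 1 ∧
    (∫ x : ℝ, (x : ℂ) * ρ x x) = (m : ℂ) ∧
    (∫ x₁ : ℝ, ∫ x₂ : ℝ, (x₁ - x₂) ^ 2 * ‖ρ x₁ x₂‖ ^ 2) /
        (∫ x₁ : ℝ, ∫ x₂ : ℝ, ‖ρ x₁ x₂‖ ^ 2) = 1 / (4 * A) ∧
    (∫ x₁ : ℝ, ∫ x₂ : ℝ, (x₁ + x₂ - 2 * m) ^ 2 * ‖ρ x₁ x₂‖ ^ 2) /
        (∫ x₁ : ℝ, ∫ x₂ : ℝ, ‖ρ x₁ x₂‖ ^ 2) = 1 / (4 * C) ∧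
    Real.sqrt (∫ x₁ : ℝ, ∫ x₂ : ℝ, (x₁ - x₂) ^ 2 * ‖ρ x₁ x₂‖ ^ 2) /
        Real.sqrt (∫ x₁ : ℝ, ∫ x₂ : ℝ, (x₁ + x₂ - 2 * m) ^ 2 * ‖ρ x₁ x₂‖ ^ 2) =
      Real.sqrt (C / A) := by
  obtain rfl : ρ = gaussianKernel A B C D E F := funext fun x₁ => funext (hρ x₁)
  have hA : 0 < A := hC.trans_le hAC
  have moment := gaussianKernel.integral_integral_mul_norm_sq (B := B) (D := D) hA hC hF hm
  have hpurity := moment 0 0 1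
  have hdiff := moment 1 0 0
  have hsum := moment 0 1 0
  simp only [one_mul, zero_mul, add_zero, zero_add, zero_div] at hpurity hdiff hsum
  have hpos : 0 < √(C / A) := by positivity
  refine ⟨?_, ?_, ?_, ?_, ?_⟩
  · simpa using gaussianKernel.integral_affine_mul_diag (B := B) (D := D) hC hF hm 1 0
  · simpa using gaussianKernel.integral_affine_mul_diag (B := B) (D := D) hC hF hm m 1
  · rw [hdiff, hpurity, mul_div_cancel_right₀ _ hpos.ne']
  · rw [hsum, hpurity, mul_div_cancel_right₀ _ hpos.ne']
  · rw [hdiff, hsum, ← sqrt_div' _ (by positivity)]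
    congr 1
    field_simp
end

section
/- Let d ≥ 1 and let ν be a nonzero σ-finite Borel measure on ℝ^d invariant under k ↦ −k, absolutely continuous with respect to Lebesgue measure, and with ∫|k|²dν(k) < ∞; set ψ_ν(l) := ∫(cos(k·l) − 1)dν(k) and B_ν := ∫ k⊗k dν(k). Then B_ν is positive definite, ψ_ν(l) < 0 for every l ≠ 0 (so the absolute maximum of ψ_ν is attained only at the origin), and for every ε ∈ (0,1) there exists δ > 0 such that for all |l| ≤ δ: −((1+ε)/2)⟨l, B_ν l⟩ ≤ ψ_ν(l) ≤ −((1−ε)/2)⟨l, B_ν l⟩. -/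
open MeasureTheory Filter Topology Asymptotics
open scoped RealInnerProductSpace ENNReal

/-!
Write `ψ(l) = -⟨l, B l⟩ / 2 + R(l)` with `R(l) = ∫ (cos x - 1 + x² / 2) dν`, `x = ⟪k, l⟫`.
Since `0 ≤ cos x - 1 + x² / 2 ≤ x² min(1, x²)`, we get `0 ≤ R(l) ≤ ‖l‖² ∫ ‖k‖² min(1, ‖k‖² ‖l‖²) dν`,
which is `o(‖l‖²)` by dominated convergence. Absolute continuity makes ν blind to the hyperplanes
`{⟪k, l⟫ = c}`, so `⟨l, B l⟩ > 0` and `ψ(l) < 0` for `l ≠ 0`; compactness of the unit sphere then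
gives `⟨l, B l⟩ ≥ c ‖l‖²`, which turns the `o(‖l‖²)` remainder into an `ε`-fraction of `⟨l, B l⟩`.
-/

namespace Real

theorem cos_sub_one_add_sq_div_two_nonneg (x : ℝ) : 0 ≤ cos x - 1 + x ^ 2 / 2 := by
  linarith [one_sub_sq_div_two_le_cos (x := x)]

theorem cos_sub_one_add_sq_div_two_le (x : ℝ) : cos x - 1 + x ^ 2 / 2 ≤ x ^ 2 * min 1 (x ^ 2) := by
  rcases le_or_gt |x| 1 with hx | hx
  · have hx2 : x ^ 2 ≤ 1 := by nlinarith [abs_nonneg x, sq_abs x]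
    have hx4 : |x| ^ 4 = x ^ 2 * x ^ 2 := by rw [← sq_abs]; ring
    rw [min_eq_right hx2]
    nlinarith [abs_le.mp (cos_bound hx)]
  · rw [min_eq_left (by nlinarith [sq_abs x])]
    nlinarith [cos_le_one x]

end Real

theorem real_inner_sq_le {E : Type*} [NormedAddCommGroup E] [InnerProductSpace ℝ E] (k l : E) :
    ⟪k, l⟫ ^ 2 ≤ ‖k‖ ^ 2 * ‖l‖ ^ 2 := by
  rw [← sq_abs, ← mul_pow]
  exact pow_le_pow_left₀ (abs_nonneg _) (abs_real_inner_le_norm k l) 2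

namespace MeasureTheory.Measure

variable {E : Type*} [NormedAddCommGroup E] [InnerProductSpace ℝ E] [FiniteDimensional ℝ E]
  [MeasurableSpace E] [BorelSpace E] (μ : Measure E) [μ.IsAddHaarMeasure] {l : E}

theorem addHaar_setOf_inner_eq (hl : l ≠ 0) (c : ℝ) : μ {k | ⟪k, l⟫ = c} = 0 := by
  have hl2 : ‖l‖ ^ 2 ≠ 0 := by positivity
  have hlevel : {k | ⟪k, l⟫ = c} = (· + -((c / ‖l‖ ^ 2) • l)) ⁻¹' (ℝ ∙ l)ᗮ := by
    ext k
    simp only [Set.mem_preimage, SetLike.mem_coe, ← sub_eq_add_neg,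
      Submodule.mem_orthogonal_singleton_iff_inner_right, inner_sub_right, real_inner_smul_right,
      real_inner_self_eq_norm_sq, div_mul_cancel₀ _ hl2, real_inner_comm l, sub_eq_zero]
    exact Iff.rfl
  rw [hlevel, measure_preimage_add_right]
  refine addHaar_submodule μ _ fun htop => hl ((inner_self_eq_zero (𝕜 := ℝ)).mp ?_)
  exact Submodule.mem_orthogonal_singleton_iff_inner_right.mp (htop ▸ Submodule.mem_top)

theorem addHaar_setOf_cos_inner_eq_one (hl : l ≠ 0) : μ {k | Real.cos ⟪k, l⟫ = 1} = 0 := by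
  refine measure_mono_null (fun k hk => ?_) (measure_iUnion_null fun n : ℤ =>
    addHaar_setOf_inner_eq μ hl (n * (2 * Real.pi)))
  obtain ⟨n, hn⟩ := (Real.cos_eq_one_iff _).mp hk
  exact Set.mem_iUnion.mpr ⟨n, hn.symm⟩

end MeasureTheory.Measure

theorem MeasureTheory.integral_pos_of_absolutelyContinuous {α : Type*} [MeasurableSpace α]
    {μ ν : Measure α} {f : α → ℝ} (hne : ν ≠ 0) (hac : ν ≪ μ) (hf : 0 ≤ f)
    (hfi : Integrable f ν) (hzero : μ {x | f x = 0} = 0) : 0 < ∫ x, f x ∂ν := by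
  rw [integral_pos_iff_support_of_nonneg hf hfi,
    measure_congr (ae_eq_univ.mpr (by rw [Function.compl_support]; exact hac hzero))]
  exact Measure.measure_univ_pos.mpr hne

theorem exists_pos_mul_norm_sq_le {E : Type*} [NormedAddCommGroup E] [NormedSpace ℝ E]
    [ProperSpace E] {f : E → ℝ} (hf : Continuous f) (hhom : ∀ (t : ℝ) x, f (t • x) = t ^ 2 * f x)
    (hpos : ∀ x, x ≠ 0 → 0 < f x) : ∃ c > 0, ∀ x, c * ‖x‖ ^ 2 ≤ f x := by
  obtain ⟨c, hc, hcf⟩ := (isCompact_sphere (0 : E) 1).exists_forall_le' hf.continuousOn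
    fun u hu => hpos u (ne_zero_of_mem_unit_sphere ⟨u, hu⟩)
  refine ⟨c, hc, fun x => ?_⟩
  rcases eq_or_ne x 0 with rfl | hx
  · simp [show f 0 = 0 by simpa using hhom 0 0]
  · have hu : ‖x‖⁻¹ • x ∈ Metric.sphere (0 : E) 1 := by simp [norm_smul, hx]
    have hscale := hhom ‖x‖ (‖x‖⁻¹ • x)
    rw [smul_smul, mul_inv_cancel₀ (norm_ne_zero_iff.mpr hx), one_smul] at hscale
    rw [hscale, mul_comm c]
    exact mul_le_mul_of_nonneg_left (hcf _ hu) (by positivity)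

theorem Matrix.posDef_of_isSymm_of_sum_mul_mul_pos {n : Type*} [Fintype n] {M : Matrix n n ℝ}
    (hM : M.IsSymm) (hpos : ∀ x : n → ℝ, x ≠ 0 → 0 < ∑ i, ∑ j, x i * M i j * x j) : M.PosDef :=
  .of_dotProduct_mulVec_pos (isHermitian_iff_isSymm.mpr hM) fun x hx => by
    simpa [dotProduct, mulVec, Finset.mul_sum, mul_assoc] using hpos x hx

theorem tendsto_integral_norm_sq_mul_min_one {E : Type*} [NormedAddCommGroup E]
    [MeasurableSpace E] [OpensMeasurableSpace E] {ν : Measure E}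
    (h2 : Integrable (fun k => ‖k‖ ^ 2) ν) :
    Tendsto (fun l : E => ∫ k, ‖k‖ ^ 2 * min 1 (‖k‖ ^ 2 * ‖l‖ ^ 2) ∂ν) (𝓝 0) (𝓝 0) := by
  have hlim := tendsto_integral_filter_of_dominated_convergence (l := 𝓝 (0 : E)) (μ := ν)
    (F := fun l k => ‖k‖ ^ 2 * min 1 (‖k‖ ^ 2 * ‖l‖ ^ 2)) (f := 0) _
    (.of_forall fun l => by fun_prop)
    (.of_forall fun l => .of_forall fun k => ?_) h2 (.of_forall fun k => ?_)
  · simpa using hlim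
  · rw [Real.norm_eq_abs, abs_of_nonneg (by positivity)]
    exact mul_le_of_le_one_right (by positivity) (min_le_left _ _)
  · exact (Continuous.tendsto' (by fun_prop) _ _ (by simp))

section LevyExponent

variable {E : Type*} [NormedAddCommGroup E] [InnerProductSpace ℝ E] [MeasurableSpace E]

noncomputable def levyExponent (ν : Measure E) (l : E) : ℝ := ∫ k, (Real.cos ⟪k, l⟫ - 1) ∂ν

noncomputable def secondMomentForm (ν : Measure E) (l : E) : ℝ := ∫ k, ⟪k, l⟫ ^ 2 ∂ν

variable [OpensMeasurableSpace E] {ν : Measure E}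

theorem integrable_inner_sq (h2 : Integrable (fun k => ‖k‖ ^ 2) ν) (l : E) :
    Integrable (fun k => ⟪k, l⟫ ^ 2) ν :=
  (h2.mul_const (‖l‖ ^ 2)).mono' (by fun_prop) (.of_forall fun k => by
    simpa only [Real.norm_eq_abs, abs_sq] using real_inner_sq_le k l)

theorem integrable_cos_inner_sub_one (h2 : Integrable (fun k => ‖k‖ ^ 2) ν) (l : E) :
    Integrable (fun k => Real.cos ⟪k, l⟫ - 1) ν :=
  ((integrable_inner_sq h2 l).div_const 2).mono' (by fun_prop) (.of_forall fun k =>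
    abs_le.mpr ⟨by linarith [Real.one_sub_sq_div_two_le_cos (x := ⟪k, l⟫)],
      by linarith [Real.cos_le_one ⟪k, l⟫, sq_nonneg ⟪k, l⟫]⟩)

theorem levyExponent_add_half_secondMomentForm (h2 : Integrable (fun k => ‖k‖ ^ 2) ν) (l : E) :
    levyExponent ν l + secondMomentForm ν l / 2 =
      ∫ k, (Real.cos ⟪k, l⟫ - 1 + ⟪k, l⟫ ^ 2 / 2) ∂ν := by
  rw [integral_add (integrable_cos_inner_sub_one h2 l) ((integrable_inner_sq h2 l).div_const 2),
    integral_div, levyExponent, secondMomentForm]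

theorem abs_levyExponent_add_half_secondMomentForm_le (h2 : Integrable (fun k => ‖k‖ ^ 2) ν)
    (l : E) : |levyExponent ν l + secondMomentForm ν l / 2| ≤
      ‖l‖ ^ 2 * ∫ k, ‖k‖ ^ 2 * min 1 (‖k‖ ^ 2 * ‖l‖ ^ 2) ∂ν := by
  have hbound : Integrable (fun k => ‖k‖ ^ 2 * min 1 (‖k‖ ^ 2 * ‖l‖ ^ 2)) ν := by
    refine (h2.bdd_mul (c := 1) (by fun_prop) (.of_forall fun k => ?_)).congr
      (.of_forall fun k => mul_comm _ _)
    rw [Real.norm_eq_abs, abs_of_nonneg (le_min zero_le_one (by positivity))]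
    exact min_le_left _ _
  rw [levyExponent_add_half_secondMomentForm h2, ← integral_const_mul, abs_of_nonneg
    (integral_nonneg fun k => Real.cos_sub_one_add_sq_div_two_nonneg _)]
  refine integral_mono ((integrable_cos_inner_sub_one h2 l).add
    ((integrable_inner_sq h2 l).div_const 2)) (hbound.const_mul _) fun k => ?_
  have hkl := real_inner_sq_le k l
  calc Real.cos ⟪k, l⟫ - 1 + ⟪k, l⟫ ^ 2 / 2 ≤ ⟪k, l⟫ ^ 2 * min 1 (⟪k, l⟫ ^ 2) :=
        Real.cos_sub_one_add_sq_div_two_le _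
    _ ≤ (‖k‖ ^ 2 * ‖l‖ ^ 2) * min 1 (‖k‖ ^ 2 * ‖l‖ ^ 2) :=
        mul_le_mul hkl (min_le_min le_rfl hkl) (le_min zero_le_one (sq_nonneg _)) (by positivity)
    _ = ‖l‖ ^ 2 * (‖k‖ ^ 2 * min 1 (‖k‖ ^ 2 * ‖l‖ ^ 2)) := by ring

theorem isLittleO_levyExponent_add_half_secondMomentForm
    (h2 : Integrable (fun k => ‖k‖ ^ 2) ν) :
    (fun l => levyExponent ν l + secondMomentForm ν l / 2) =o[𝓝 0] fun l => ‖l‖ ^ 2 := by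
  refine isLittleO_iff.mpr fun c hc => ?_
  filter_upwards [tendsto_integral_norm_sq_mul_min_one h2 (Iic_mem_nhds hc)] with l hl
  rw [Real.norm_eq_abs, norm_pow, norm_norm, mul_comm c]
  exact (abs_levyExponent_add_half_secondMomentForm_le h2 l).trans
    (mul_le_mul_of_nonneg_left hl (by positivity))

theorem secondMomentForm_pos [FiniteDimensional ℝ E] [BorelSpace E] {μ : Measure E}
    [μ.IsAddHaarMeasure] (hne : ν ≠ 0) (hac : ν ≪ μ) (h2 : Integrable (fun k => ‖k‖ ^ 2) ν)
    {l : E} (hl : l ≠ 0) : 0 < secondMomentForm ν l :=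
  integral_pos_of_absolutelyContinuous hne hac (fun k => sq_nonneg _) (integrable_inner_sq h2 l)
    (by simpa using μ.addHaar_setOf_inner_eq hl 0)

theorem levyExponent_neg [FiniteDimensional ℝ E] [BorelSpace E] {μ : Measure E}
    [μ.IsAddHaarMeasure] (hne : ν ≠ 0) (hac : ν ≪ μ) (h2 : Integrable (fun k => ‖k‖ ^ 2) ν)
    {l : E} (hl : l ≠ 0) : levyExponent ν l < 0 := by
  have hpos : 0 < ∫ k, -(Real.cos ⟪k, l⟫ - 1) ∂ν :=
    integral_pos_of_absolutelyContinuous hne hac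
      (fun k => neg_nonneg.mpr (sub_nonpos.mpr (Real.cos_le_one _)))
      (integrable_cos_inner_sub_one h2 l).neg
      (by simpa only [neg_eq_zero, sub_eq_zero] using μ.addHaar_setOf_cos_inner_eq_one hl)
  rw [integral_neg] at hpos
  exact neg_pos.mp hpos

end LevyExponent

theorem sum_mul_mul_eq_secondMomentForm {d : ℕ} {ν : Measure (EuclideanSpace ℝ (Fin d))}
    (h2 : Integrable (fun k => ‖k‖ ^ 2) ν) {B : Matrix (Fin d) (Fin d) ℝ}
    (hB : ∀ i j, B i j = ∫ k, k i * k j ∂ν) (l : EuclideanSpace ℝ (Fin d)) :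
    ∑ i, ∑ j, l i * B i j * l j = secondMomentForm ν l := by
  have hentry : ∀ i j,
      Integrable (fun k : EuclideanSpace ℝ (Fin d) => l i * (k i * k j) * l j) ν :=
    fun i j => ((h2.mono' (by fun_prop) (.of_forall fun k => by
      rw [norm_mul, sq]
      exact mul_le_mul (PiLp.norm_apply_le k i) (PiLp.norm_apply_le k j) (norm_nonneg _)
        (norm_nonneg _))).const_mul _).mul_const _
  have hinner : ∀ k : EuclideanSpace ℝ (Fin d),
      ⟪k, l⟫ ^ 2 = ∑ i, ∑ j, l i * (k i * k j) * l j := by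
    intro k
    simp only [PiLp.inner_apply, RCLike.inner_apply, conj_trivial, sq, Finset.sum_mul_sum]
    exact Finset.sum_congr rfl fun i _ => Finset.sum_congr rfl fun j _ => by ring
  calc ∑ i, ∑ j, l i * B i j * l j = ∑ i, ∑ j, ∫ k, l i * (k i * k j) * l j ∂ν := by
        simp only [hB, integral_const_mul, integral_mul_const]
    _ = secondMomentForm ν l := by
        simp only [secondMomentForm, hinner]
        rw [integral_finsetSum _ fun i _ => integrable_finsetSum _ fun j _ => hentry i j]
        exact Finset.sum_congr rfl fun i _ => (integral_finsetSum _ fun j _ => hentry i j).symm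

theorem levy_exponent_density_general
    (d : ℕ)
    (ν : Measure (EuclideanSpace ℝ (Fin d)))
    (hne : ν ≠ 0)
    (hac : ν ≪ (volume : Measure (EuclideanSpace ℝ (Fin d))))
    (hmom : (∫⁻ k, (‖k‖₊ : ℝ≥0∞) ^ 2 ∂ν) < ⊤)
    (ψ : EuclideanSpace ℝ (Fin d) → ℝ)
    (hψ : ∀ l, ψ l = ∫ k, (Real.cos (⟪k, l⟫ : ℝ) - 1) ∂ν)
    (B : Matrix (Fin d) (Fin d) ℝ)
    (hB : ∀ i j, B i j = ∫ k, k i * k j ∂ν) :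
    B.PosDef ∧
    (∀ l : EuclideanSpace ℝ (Fin d), l ≠ 0 → ψ l < 0) ∧
    (∀ ε ∈ Set.Ioo (0 : ℝ) 1, ∃ δ > (0 : ℝ), ∀ l : EuclideanSpace ℝ (Fin d), ‖l‖ ≤ δ →
      -((1 + ε) / 2) * (∑ i, ∑ j, l i * B i j * l j) ≤ ψ l ∧
      ψ l ≤ -((1 - ε) / 2) * (∑ i, ∑ j, l i * B i j * l j)) := by
  have h2 : Integrable (fun k : EuclideanSpace ℝ (Fin d) => ‖k‖ ^ 2) ν :=
    ⟨by fun_prop, by simp only [HasFiniteIntegral, enorm_pow, enorm_norm]; exact hmom⟩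
  have hQ := sum_mul_mul_eq_secondMomentForm h2 hB
  have hQpos : ∀ l : EuclideanSpace ℝ (Fin d), l ≠ 0 → 0 < ∑ i, ∑ j, l i * B i j * l j :=
    fun l hl => hQ l ▸ secondMomentForm_pos hne hac h2 hl
  obtain ⟨c, hc, hcQ⟩ := exists_pos_mul_norm_sq_le (by fun_prop)
    (fun t l => by simp only [PiLp.smul_apply, smul_eq_mul, Finset.mul_sum]; ring_nf) hQpos
  refine ⟨Matrix.posDef_of_isSymm_of_sum_mul_mul_pos (.ext fun i j => by simp only [hB, mul_comm])
    fun x hx => by simpa using hQpos (WithLp.toLp 2 x) (by simpa using hx),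
    fun l hl => hψ l ▸ levyExponent_neg hne hac h2 hl, fun ε ⟨hε, _⟩ => ?_⟩
  obtain ⟨δ, hδ, hsmall⟩ := Metric.nhds_basis_closedBall.eventually_iff.mp
    ((isLittleO_levyExponent_add_half_secondMomentForm h2).bound (by positivity : 0 < ε * c / 2))
  refine ⟨δ, hδ, fun l hl => ?_⟩
  have hR := hsmall (mem_closedBall_zero_iff.mpr hl)
  rw [Real.norm_eq_abs, norm_pow, norm_norm] at hR
  have hcoer : c * ‖l‖ ^ 2 ≤ secondMomentForm ν l := hQ l ▸ hcQ l
  have hεcoer := mul_le_mul_of_nonneg_left hcoer hε.le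
  rw [show ψ l = levyExponent ν l from hψ l, hQ l]
  constructor <;> linarith [abs_le.mp hR]

/-- For a nonzero symmetric measure `ν` absolutely continuous with respect to
Lebesgue measure with finite second moments: the second-moment matrix `B_ν` is positive definite,
the Lévy exponent `ψ_ν` is strictly negative away from the origin (so its absolute maximum is
attained only at `0`), and for every `ε ∈ (0,1)` there is `δ > 0` with
`−((1+ε)/2)⟨l,B_ν l⟩ ≤ ψ_ν(l) ≤ −((1−ε)/2)⟨l,B_ν l⟩` for `|l| ≤ δ`. -/
theorem levy_exponent_density
    (d : ℕ) (hd : 1 ≤ d)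
    (ν : Measure (EuclideanSpace ℝ (Fin d))) [SigmaFinite ν]
    (hne : ν ≠ 0)
    (hsymm : ν.map (fun k => -k) = ν)
    (hac : ν ≪ (volume : Measure (EuclideanSpace ℝ (Fin d))))
    (hmom : (∫⁻ k, (‖k‖₊ : ℝ≥0∞) ^ 2 ∂ν) < ⊤)
    (ψ : EuclideanSpace ℝ (Fin d) → ℝ)
    (hψ : ∀ l, ψ l = ∫ k, (Real.cos (⟪k, l⟫ : ℝ) - 1) ∂ν)
    (B : Matrix (Fin d) (Fin d) ℝ)
    (hB : ∀ i j, B i j = ∫ k, k i * k j ∂ν) :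
    B.PosDef ∧
    (∀ l : EuclideanSpace ℝ (Fin d), l ≠ 0 → ψ l < 0) ∧
    (∀ ε ∈ Set.Ioo (0 : ℝ) 1, ∃ δ > (0 : ℝ), ∀ l : EuclideanSpace ℝ (Fin d), ‖l‖ ≤ δ →
      -((1 + ε) / 2) * (∑ i, ∑ j, l i * B i j * l j) ≤ ψ l ∧
      ψ l ≤ -((1 - ε) / 2) * (∑ i, ∑ j, l i * B i j * l j)) :=
  levy_exponent_density_general d ν hne hac hmom ψ hψ B hB
end
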